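/- Let the initial valuation satisfy v(t_x) = v(¬t_x) = 0 for all x ∈ I, with arbitrary values v(p_{xy}) ∈ [0,1]. Then the upper revised valuation v* equals the first iterate Tv and is given by: v*(t_x) = min over y ≠ x of v(p_{xy}); v*(¬t_x) = min over y ≠ x of v(p_{yx}); and v*(p_{xy}) = v(p_{xy}) for all distinct x, y. -/

import Mathlib

/-! From zero belief in the `t_x` and `¬t_x`, one step of `T` sets `t_x` and `¬t_x` to the minima
`min_{y ≠ x} p_{xy}` and `min_{y ≠ x} p_{yx}` without touching any `p_{xy}`, because a conjunction
containing `t_x = 0` or `¬t_x = 0` is `0`. A valuation in which every `t_x`, `¬t_x` equals its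
minimum is a fixed point of `T` on the literals: `t_x ≤ p_{xy}` and `¬t_y ≤ p_{xy}` bound the
conjunctions that could raise `p_{xy}`. Hence all later iterates agree with `Tv`. -/

/-- A valuation for prominence doctrines: degrees of belief for the literals
`t_x` ("x is prominent"), `¬t_x`, and `p_{xy}` ("x is preferable to y", for
distinct `x, y`), under the identification `¬p_{xy} = p_{yx}`. -/
structure PVal (I : Type*) where
  t : I → ℝ
  nt : I → ℝ
  p : I → I → ℝ

/-- Max over a (possibly empty) index set of reals: the empty max is `0`
(note `Real.sSup_empty = 0`). -/
noncomputable def sup0 (S : Set ℝ) : ℝ := sSup S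

open Classical in
/-- Min over a (possibly empty) index set of reals: the empty min is `1`. -/
noncomputable def inf1 (S : Set ℝ) : ℝ := if S.Nonempty then sInf S else 1

/-- The one-step revision operator associated with the symmetric prominence
doctrine, whose clauses are `t_x ∨ ⋁_{y ≠ x} p_{yx}` and `¬t_x ∨ ⋁_{y ≠ x} p_{xy}`. -/
noncomputable def Tsym {I : Type*} (v : PVal I) : PVal I where
  t := fun x => max (v.t x) (inf1 {b : ℝ | ∃ y, y ≠ x ∧ b = v.p x y})
  nt := fun x => max (v.nt x) (inf1 {b : ℝ | ∃ y, y ≠ x ∧ b = v.p y x})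
  p := fun x y => max (v.p x y)
    (max (min (v.t x) (inf1 {b : ℝ | ∃ z, z ≠ x ∧ z ≠ y ∧ b = v.p z x}))
         (min (v.nt y) (inf1 {b : ℝ | ∃ z, z ≠ x ∧ z ≠ y ∧ b = v.p y z})))

lemma inf1_le {S : Set ℝ} (hS : BddBelow S) {a : ℝ} (ha : a ∈ S) : inf1 S ≤ a := by
  rw [inf1, if_pos ⟨a, ha⟩]
  exact csInf_le hS ha

lemma le_inf1 {S : Set ℝ} {c : ℝ} (hc : c ≤ 1) (h : ∀ a ∈ S, c ≤ a) : c ≤ inf1 S := by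
  unfold inf1
  split_ifs with hS
  · exact le_csInf hS h
  · exact hc

namespace PVal

variable {I : Type*}

/-- `min_{y ≠ x} u(p_{xy})` -/
noncomputable def minOut (u : PVal I) (x : I) : ℝ := inf1 {b : ℝ | ∃ y, y ≠ x ∧ b = u.p x y}

/-- `min_{y ≠ x} u(p_{yx})` -/
noncomputable def minIn (u : PVal I) (x : I) : ℝ := inf1 {b : ℝ | ∃ y, y ≠ x ∧ b = u.p y x}

/-- Equality on all literals: the diagonal entries `p x x` are not literals. -/
def OffDiagEq (u w : PVal I) : Prop :=
  u.t = w.t ∧ u.nt = w.nt ∧ ∀ x y, x ≠ y → u.p x y = w.p x y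

def OffDiagNonneg (u : PVal I) : Prop := ∀ x y, x ≠ y → 0 ≤ u.p x y

def IsTight (u : PVal I) : Prop := u.t = u.minOut ∧ u.nt = u.minIn

lemma OffDiagEq.refl (u : PVal I) : OffDiagEq u u := ⟨rfl, rfl, fun _ _ _ => rfl⟩

lemma OffDiagEq.trans {u w z : PVal I} (huw : OffDiagEq u w) (hwz : OffDiagEq w z) :
    OffDiagEq u z :=
  ⟨huw.1.trans hwz.1, huw.2.1.trans hwz.2.1,
    fun x y hxy => (huw.2.2 x y hxy).trans (hwz.2.2 x y hxy)⟩

lemma OffDiagNonneg.of_offDiagEq {u w : PVal I} (h : OffDiagEq u w) (hw : OffDiagNonneg w) :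
    OffDiagNonneg u :=
  fun x y hxy => (h.2.2 x y hxy).symm ▸ hw x y hxy

section offDiag

variable {u w : PVal I} (h : ∀ x y, x ≠ y → u.p x y = w.p x y)
include h

lemma minOut_congr : u.minOut = w.minOut := by
  funext x
  refine congrArg inf1 (Set.ext fun b => ?_)
  constructor <;> rintro ⟨y, hy, rfl⟩ <;> exact ⟨y, hy, by rw [h x y (Ne.symm hy)]⟩

lemma minIn_congr : u.minIn = w.minIn := by
  funext x
  refine congrArg inf1 (Set.ext fun b => ?_)
  constructor <;> rintro ⟨y, hy, rfl⟩ <;> exact ⟨y, hy, by rw [h y x hy]⟩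

end offDiag

section nonneg

variable {u : PVal I} (hu : OffDiagNonneg u)
include hu

lemma minOut_le {x y : I} (hxy : x ≠ y) : u.minOut x ≤ u.p x y :=
  inf1_le ⟨0, by rintro b ⟨z, hz, rfl⟩; exact hu x z (Ne.symm hz)⟩ ⟨y, Ne.symm hxy, rfl⟩

lemma minIn_le {x y : I} (hxy : x ≠ y) : u.minIn y ≤ u.p x y :=
  inf1_le ⟨0, by rintro b ⟨z, hz, rfl⟩; exact hu z y hz⟩ ⟨x, hxy, rfl⟩

lemma minOut_nonneg (x : I) : 0 ≤ u.minOut x :=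
  le_inf1 zero_le_one (by rintro b ⟨y, hy, rfl⟩; exact hu x y (Ne.symm hy))

lemma minIn_nonneg (x : I) : 0 ≤ u.minIn x :=
  le_inf1 zero_le_one (by rintro b ⟨y, hy, rfl⟩; exact hu y x hy)

end nonneg

lemma Tsym_t (u : PVal I) (x : I) : (Tsym u).t x = max (u.t x) (u.minOut x) := rfl

lemma Tsym_nt (u : PVal I) (x : I) : (Tsym u).nt x = max (u.nt x) (u.minIn x) := rfl

lemma Tsym_p_of_le {u : PVal I} {x y : I} (ht : u.t x ≤ u.p x y) (hnt : u.nt y ≤ u.p x y) :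
    (Tsym u).p x y = u.p x y :=
  max_eq_left (max_le ((min_le_left _ _).trans ht) ((min_le_left _ _).trans hnt))

lemma offDiagEq_Tsym_self {u : PVal I} (hu0 : OffDiagNonneg u) (hu : IsTight u) :
    OffDiagEq (Tsym u) u := by
  refine ⟨funext fun x => ?_, funext fun x => ?_, fun x y hxy => ?_⟩
  · rw [Tsym_t, ← hu.1, max_self]
  · rw [Tsym_nt, ← hu.2, max_self]
  · exact Tsym_p_of_le (hu.1 ▸ minOut_le hu0 hxy) (hu.2 ▸ minIn_le hu0 hxy)

lemma IsTight.of_offDiagEq {u w : PVal I} (h : OffDiagEq u w) (hw : IsTight w) : IsTight u := by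
  rw [IsTight, h.1, h.2.1, minOut_congr h.2.2, minIn_congr h.2.2]
  exact hw

lemma offDiagEq_Tsym {u w : PVal I} (hw0 : OffDiagNonneg w) (hw : IsTight w)
    (h : OffDiagEq u w) : OffDiagEq (Tsym u) w :=
  (offDiagEq_Tsym_self (hw0.of_offDiagEq h) (hw.of_offDiagEq h)).trans h

section zero

variable {v : PVal I} (hv0 : OffDiagNonneg v)
include hv0

lemma Tsym_t_of_zero (ht : ∀ x, v.t x = 0) (x : I) : (Tsym v).t x = v.minOut x := by
  rw [Tsym_t, ht, max_eq_right (minOut_nonneg hv0 x)]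

lemma Tsym_nt_of_zero (hnt : ∀ x, v.nt x = 0) (x : I) : (Tsym v).nt x = v.minIn x := by
  rw [Tsym_nt, hnt, max_eq_right (minIn_nonneg hv0 x)]

variable (ht : ∀ x, v.t x = 0) (hnt : ∀ x, v.nt x = 0)
include ht hnt

lemma Tsym_p_of_zero {x y : I} (hxy : x ≠ y) : (Tsym v).p x y = v.p x y :=
  Tsym_p_of_le ((ht x).symm ▸ hv0 x y hxy) ((hnt y).symm ▸ hv0 x y hxy)

lemma isTight_Tsym_of_zero : IsTight (Tsym v) := by
  have hp : ∀ x y, x ≠ y → (Tsym v).p x y = v.p x y := fun _ _ => Tsym_p_of_zero hv0 ht hnt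
  refine ⟨funext fun x => ?_, funext fun x => ?_⟩
  · rw [Tsym_t_of_zero hv0 ht, minOut_congr hp]
  · rw [Tsym_nt_of_zero hv0 hnt, minIn_congr hp]

lemma offDiagEq_iterate_Tsym (n : ℕ) : OffDiagEq (Tsym^[n + 1] v) (Tsym v) := by
  have hT0 : OffDiagNonneg (Tsym v) := fun x y hxy =>
    (Tsym_p_of_zero hv0 ht hnt hxy).symm ▸ hv0 x y hxy
  induction n with
  | zero => exact OffDiagEq.refl _
  | succ n ih =>
    rw [Function.iterate_succ_apply']
    exact offDiagEq_Tsym hT0 (isTight_Tsym_of_zero hv0 ht hnt) ih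

end zero

end PVal

theorem stmt11_general {I : Type*}
    (v : PVal I)
    (hbox : ∀ x y : I, x ≠ y → v.p x y ∈ Set.Icc (0:ℝ) 1)
    (ht : ∀ x, v.t x = 0) (hnt : ∀ x, v.nt x = 0)
    (vstar : PVal I) (hstar : ∃ N : ℕ, ∀ n ≥ N, Tsym^[n] v = vstar) :
    -- v* equals the first iterate Tv
    (∀ x, vstar.t x = (Tsym v).t x) ∧
    (∀ x, vstar.nt x = (Tsym v).nt x) ∧
    (∀ x y : I, x ≠ y → vstar.p x y = (Tsym v).p x y) ∧
    -- explicit formulas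
    (∀ x, vstar.t x = inf1 {b : ℝ | ∃ y, y ≠ x ∧ b = v.p x y}) ∧
    (∀ x, vstar.nt x = inf1 {b : ℝ | ∃ y, y ≠ x ∧ b = v.p y x}) ∧
    (∀ x y : I, x ≠ y → vstar.p x y = v.p x y) := by
  have hv0 : PVal.OffDiagNonneg v := fun x y hxy => (hbox x y hxy).1
  obtain ⟨N, hN⟩ := hstar
  obtain ⟨hst, hsnt, hsp⟩ : PVal.OffDiagEq vstar (Tsym v) :=
    hN (N + 1) N.le_succ ▸ PVal.offDiagEq_iterate_Tsym hv0 ht hnt N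
  refine ⟨congrFun hst, congrFun hsnt, hsp, fun x => ?_, fun x => ?_, fun x y hxy => ?_⟩
  · rw [hst, PVal.Tsym_t_of_zero hv0 ht, PVal.minOut]
  · rw [hsnt, PVal.Tsym_nt_of_zero hv0 hnt, PVal.minIn]
  · rw [hsp x y hxy, PVal.Tsym_p_of_zero hv0 ht hnt hxy]

/-- Symmetric prominence: with zero initial belief in the `t_x` and `¬t_x`, the
upper revised valuation equals the first iterate `Tv` and is given by
`v*(t_x) = min_{y ≠ x} v(p_{xy})`, `v*(¬t_x) = min_{y ≠ x} v(p_{yx})`,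
`v*(p_{xy}) = v(p_{xy})`. -/
theorem stmt11 {I : Type*} [Fintype I] [DecidableEq I]
    (hcard : 2 ≤ Fintype.card I)
    (v : PVal I)
    (hbox : ∀ x y : I, x ≠ y → v.p x y ∈ Set.Icc (0:ℝ) 1)
    (ht : ∀ x, v.t x = 0) (hnt : ∀ x, v.nt x = 0)
    (vstar : PVal I) (hstar : ∃ N : ℕ, ∀ n ≥ N, Tsym^[n] v = vstar) :
    -- v* equals the first iterate Tv
    (∀ x, vstar.t x = (Tsym v).t x) ∧
    (∀ x, vstar.nt x = (Tsym v).nt x) ∧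
    (∀ x y : I, x ≠ y → vstar.p x y = (Tsym v).p x y) ∧
    -- explicit formulas
    (∀ x, vstar.t x = inf1 {b : ℝ | ∃ y, y ≠ x ∧ b = v.p x y}) ∧
    (∀ x, vstar.nt x = inf1 {b : ℝ | ∃ y, y ≠ x ∧ b = v.p y x}) ∧
    (∀ x y : I, x ≠ y → vstar.p x y = v.p x y) :=
  stmt11_general v hbox ht hnt vstar hstar
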